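/- arXiv:1608.00172 — 4 statements merged into one kernel-verified Lean document; each statement's English description precedes it below -/
import Mathlib

section
/- Let A be a Poisson algebra over k and M a left Poisson A-module that is isomorphic to A as an A-module (i.e. free of rank one). Then there exists a Poisson derivation δ of A such that M ≅ ^δA as left Poisson modules. Moreover, δ is unique up to a log-Hamiltonian derivation: if M ≅ ^δA and M ≅ ^{δ'}A as left Poisson modules, then δ − δ' is a log-Hamiltonian derivation of A. -/
/-! ### Basic Poisson algebra notions -/

/-- A Poisson algebra structure on a commutative `k`-algebra `A`:
a `k`-bilinear Lie bracket satisfying the Leibniz rule. -/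
structure PoissonAlgebra (k A : Type*) [CommRing k] [CommRing A] [Algebra k A] where
  br : A →ₗ[k] A →ₗ[k] A
  skew : ∀ a b, br a b = - br b a
  jacobi : ∀ a b c, br a (br b c) + br b (br c a) + br c (br a b) = 0
  leibniz : ∀ a b c, br (a * b) c = a * br b c + br a c * b

/-- A left Poisson module structure on an `A`-module `M`, with bracket `br a m = {a, m}`. -/
structure LeftPMod {k A : Type*} [CommRing k] [CommRing A] [Algebra k A]
    (P : PoissonAlgebra k A) (M : Type*) [AddCommGroup M] [Module k M] [Module A M]
    [IsScalarTower k A M] where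
  br : A →ₗ[k] M →ₗ[k] M
  lie : ∀ a b m, br (P.br a b) m = br a (br b m) - br b (br a m)
  mul : ∀ a b m, br (a * b) m = a • br b m + b • br a m
  act : ∀ a b m, br a (b • m) = P.br a b • m + b • br a m

/-- A right Poisson module structure on an `A`-module `M`, with bracket `br m a = {m, a}`. -/
structure RightPMod {k A : Type*} [CommRing k] [CommRing A] [Algebra k A]
    (P : PoissonAlgebra k A) (M : Type*) [AddCommGroup M] [Module k M] [Module A M]
    [IsScalarTower k A M] where
  br : M →ₗ[k] A →ₗ[k] M
  lie : ∀ m a b, br m (P.br a b) = br (br m a) b - br (br m b) a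
  mul : ∀ m a b, br m (a * b) = a • br m b + b • br m a
  act : ∀ b m a, br (b • m) a = P.br b a • m + b • br m a

/-- A Poisson derivation of a Poisson algebra. -/
structure PoissonDerivation {k A : Type*} [CommRing k] [CommRing A] [Algebra k A]
    (P : PoissonAlgebra k A) where
  d : A →ₗ[k] A
  leibniz : ∀ a b, d (a * b) = a * d b + d a * b
  compat : ∀ a b, d (P.br a b) = P.br (d a) b + P.br a (d b)

/-- A log-Hamiltonian derivation is one of the form `a ↦ u⁻¹ * {u, a}` for a unit `u`. -/
def PoissonDerivation.IsLogHamiltonian {k A : Type*} [CommRing k] [CommRing A] [Algebra k A]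
    {P : PoissonAlgebra k A} (δ : PoissonDerivation P) : Prop :=
  ∃ u : Aˣ, ∀ a : A, (u : A) * δ.d a = P.br (u : A) a

/-! A rank-one free module has a basis vector `m₀ = e⁻¹ 1`, and `δ(a)` is the coordinate of `{a, m₀}`;
the module axioms for `M` translate into the derivation axioms for `δ`. Two trivializations differ by
multiplication by a unit `u`, and comparing their brackets at `m₀` gives `u (δ - δ') = {u, -}`. -/

namespace PoissonAlgebra

variable {k A : Type*} [CommRing k] [CommRing A] [Algebra k A] (P : PoissonAlgebra k A)

theorem br_one_left (c : A) : P.br 1 c = 0 := by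
  have h := P.leibniz 1 1 c
  simp only [one_mul, mul_one] at h
  exact right_eq_add.mp h

theorem br_one_right (a : A) : P.br a 1 = 0 := by
  rw [P.skew, br_one_left, neg_zero]

end PoissonAlgebra

namespace LinearEquiv

variable {A M : Type*} [CommRing A] [AddCommGroup M] [Module A M]

theorem symm_apply_eq_smul_symm_one (e : M ≃ₗ[A] A) (x : A) : e.symm x = x • e.symm 1 := by
  rw [← map_smul, smul_eq_mul, mul_one]

theorem isUnit_apply_one (f : A ≃ₗ[A] A) : IsUnit (f 1) :=
  IsUnit.of_mul_eq_one (f.symm 1) <| by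
    rw [mul_comm, ← smul_eq_mul, ← map_smul, smul_eq_mul, mul_one, apply_symm_apply]

end LinearEquiv

namespace LeftPMod

variable {k A M : Type*} [CommRing k] [CommRing A] [Algebra k A] {P : PoissonAlgebra k A}
  [AddCommGroup M] [Module k M] [Module A M] [IsScalarTower k A M] (L : LeftPMod P M)

def twistLinearMap (e : M ≃ₗ[A] A) : A →ₗ[k] A :=
  (e.restrictScalars k).toLinearMap ∘ₗ L.br.flip (e.symm 1)

theorem twistLinearMap_apply (e : M ≃ₗ[A] A) (a : A) :
    L.twistLinearMap e a = e (L.br a (e.symm 1)) :=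
  rfl

theorem apply_br (e : M ≃ₗ[A] A) (a : A) (m : M) :
    e (L.br a m) = P.br a (e m) + L.twistLinearMap e a * e m := by
  conv_lhs => rw [← e.symm_apply_apply m, e.symm_apply_eq_smul_symm_one, L.act]
  rw [map_add, map_smul, map_smul, e.apply_symm_apply, smul_eq_mul, smul_eq_mul, mul_one,
    mul_comm, twistLinearMap_apply]

def twist (e : M ≃ₗ[A] A) : PoissonDerivation P where
  d := L.twistLinearMap e
  leibniz a b := by
    simp only [twistLinearMap_apply, L.mul, map_add, map_smul, smul_eq_mul, mul_comm b]
  compat a b := by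
    rw [twistLinearMap_apply, L.lie, map_sub, L.apply_br e a (L.br b _),
      L.apply_br e b (L.br a _), ← twistLinearMap_apply, ← twistLinearMap_apply, P.skew b]
    ring

theorem exists_unit_mul_sub_eq_br {δ δ' : A → A} {e e' : M ≃ₗ[A] A}
    (he : ∀ a m, e (L.br a m) = P.br a (e m) + δ a * e m)
    (he' : ∀ a m, e' (L.br a m) = P.br a (e' m) + δ' a * e' m) :
    ∃ u : Aˣ, ∀ a, (u : A) * (δ a - δ' a) = P.br u a := by
  have hu : IsUnit (e (e'.symm 1)) := (e'.symm.trans e).isUnit_apply_one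
  refine ⟨hu.unit, fun a => ?_⟩
  have hbr : L.br a (e'.symm 1) = δ' a • e'.symm 1 := e'.injective <| by
    rw [he', map_smul, e'.apply_symm_apply, P.br_one_right, smul_eq_mul, mul_one, zero_add]
  have h := he a (e'.symm 1)
  rw [hbr, map_smul, smul_eq_mul] at h
  rw [IsUnit.unit_spec, P.skew]
  linear_combination -h

end LeftPMod

theorem stmt_7_general {k A : Type*} [Field k]
    [CommRing A] [Algebra k A] (P : PoissonAlgebra k A)
    (M : Type*) [AddCommGroup M] [Module k M] [Module A M] [IsScalarTower k A M]
    (L : LeftPMod P M) (hfree : Nonempty (M ≃ₗ[A] A)) :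
    (∃ (δ : PoissonDerivation P) (e : M ≃ₗ[A] A),
        ∀ (a : A) (m : M), e (L.br a m) = P.br a (e m) + δ.d a * e m) ∧
    (∀ (δ δ' : PoissonDerivation P),
        (∃ e : M ≃ₗ[A] A, ∀ (a : A) (m : M), e (L.br a m) = P.br a (e m) + δ.d a * e m) →
        (∃ e' : M ≃ₗ[A] A, ∀ (a : A) (m : M), e' (L.br a m) = P.br a (e' m) + δ'.d a * e' m) →
        ∃ u : Aˣ, ∀ a : A, (u : A) * (δ.d a - δ'.d a) = P.br (u : A) a) := by
  obtain ⟨e⟩ := hfree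
  exact ⟨⟨L.twist e, e, L.apply_br e⟩,
    fun _ _ ⟨_, he⟩ ⟨_, he'⟩ => L.exists_unit_mul_sub_eq_br he he'⟩

theorem stmt_7 {k A : Type*} [Field k] [IsAlgClosed k] [CharZero k]
    [CommRing A] [Algebra k A] (P : PoissonAlgebra k A)
    (M : Type*) [AddCommGroup M] [Module k M] [Module A M] [IsScalarTower k A M]
    (L : LeftPMod P M) (hfree : Nonempty (M ≃ₗ[A] A)) :
    (∃ (δ : PoissonDerivation P) (e : M ≃ₗ[A] A),
        ∀ (a : A) (m : M), e (L.br a m) = P.br a (e m) + δ.d a * e m) ∧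
    (∀ (δ δ' : PoissonDerivation P),
        (∃ e : M ≃ₗ[A] A, ∀ (a : A) (m : M), e (L.br a m) = P.br a (e m) + δ.d a * e m) →
        (∃ e' : M ≃ₗ[A] A, ∀ (a : A) (m : M), e' (L.br a m) = P.br a (e' m) + δ'.d a * e' m) →
        ∃ u : Aˣ, ∀ a : A, (u : A) * (δ.d a - δ'.d a) = P.br (u : A) a) :=
  stmt_7_general P M L hfree
end

section
/- Let A be a Poisson algebra over k, M a right Poisson A-module and N a left Poisson A-module. Then the tensor product M ⊗_A N carries a well-defined right Poisson A-module structure given by (m⊗n)·a = (ma)⊗n = m⊗(an) and {m⊗n, a} = {m,a}_M ⊗ n − m ⊗ {a,n}_N for all a ∈ A, m ∈ M, n ∈ N; that is, the bracket is well-defined on M ⊗_A N and satisfies the right Poisson module axioms. -/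
/-! ### STATEMENT 8:
For a right Poisson module `M` and a left Poisson module `N` over a Poisson algebra `A`,
the tensor product `M ⊗[A] N` carries a (unique) right Poisson module structure with
`{m ⊗ n, a} = {m, a}_M ⊗ n - m ⊗ {a, n}_N`.  (The module structure on `M ⊗[A] N`
automatically satisfies `(m ⊗ n) • a = (m • a) ⊗ n = m ⊗ (a • n)` since `A` is
commutative.) -/
open TensorProduct

section Aux
variable {k A : Type*} [CommRing k] [CommRing A] [Algebra k A] {P : PoissonAlgebra k A}
variable {M : Type*} [AddCommGroup M] [Module k M] [Module A M] [IsScalarTower k A M]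
variable {N : Type*} [AddCommGroup N] [Module k N] [Module A N] [IsScalarTower k A N]
variable (Mr : RightPMod P M) (Nl : LeftPMod P N)

noncomputable def tBr (a : A) : M ⊗[A] N →+ M ⊗[A] N :=
  TensorProduct.liftAddHom
    { toFun := fun m =>
        { toFun := fun n => Mr.br m a ⊗ₜ[A] n - m ⊗ₜ[A] Nl.br a n
          map_zero' := by simp
          map_add' := fun n₁ n₂ => by simp [tmul_add]; abel }
      map_zero' := by ext n; simp
      map_add' := fun m₁ m₂ => by ext n; simp [add_tmul]; abel }
    (fun r m n => by
      simp only [AddMonoidHom.coe_mk, ZeroHom.coe_mk, Mr.act, Nl.act, add_tmul, tmul_add,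
        smul_tmul, tmul_smul, P.skew r a, neg_smul, tmul_neg, neg_tmul]
      abel)

@[simp] lemma tBr_tmul (a : A) (m : M) (n : N) :
    tBr Mr Nl a (m ⊗ₜ[A] n) = Mr.br m a ⊗ₜ[A] n - m ⊗ₜ[A] Nl.br a n := rfl

noncomputable def tBrL : M ⊗[A] N →ₗ[k] A →ₗ[k] M ⊗[A] N :=
  LinearMap.mk₂ k (fun x a => tBr Mr Nl a x)
    (fun x y a => map_add _ x y)
    (fun c x a => by
      induction x using TensorProduct.induction_on with
      | zero => simp
      | tmul m n =>
          show tBr Mr Nl a ((c • m) ⊗ₜ[A] n) = c • tBr Mr Nl a (m ⊗ₜ[A] n)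
          rw [tBr_tmul, tBr_tmul, map_smul, LinearMap.smul_apply,
            smul_sub, smul_tmul', smul_tmul']
      | add x y hx hy => simp [smul_add, hx, hy])
    (fun x a b => by
      induction x using TensorProduct.induction_on with
      | zero => simp
      | tmul m n => simp [tmul_add, add_tmul]; abel
      | add x y hx hy => simp_all; abel)
    (fun c x a => by
      induction x using TensorProduct.induction_on with
      | zero => simp
      | tmul m n => simp [tmul_smul, smul_sub, smul_tmul']
      | add x y hx hy => simp_all)

@[simp] lemma tBrL_tmul (m : M) (n : N) (a : A) :
    tBrL (k := k) Mr Nl (m ⊗ₜ[A] n) a = Mr.br m a ⊗ₜ[A] n - m ⊗ₜ[A] Nl.br a n := rfl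

end Aux

open TensorProduct in
theorem stmt_8 {k A : Type*} [Field k] [IsAlgClosed k] [CharZero k]
    [CommRing A] [Algebra k A] (P : PoissonAlgebra k A)
    (M : Type*) [AddCommGroup M] [Module k M] [Module A M] [IsScalarTower k A M]
    (N : Type*) [AddCommGroup N] [Module k N] [Module A N] [IsScalarTower k A N]
    (Mr : RightPMod P M) (Nl : LeftPMod P N) :
    ∃ T : RightPMod P (M ⊗[A] N),
      ∀ (m : M) (n : N) (a : A),
        T.br (m ⊗ₜ[A] n) a = (Mr.br m a) ⊗ₜ[A] n - m ⊗ₜ[A] (Nl.br a n) := by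
  refine ⟨⟨tBrL Mr Nl, ?_, ?_, ?_⟩, fun m n a => rfl⟩
  · intro x a b
    induction x using TensorProduct.induction_on with
    | zero => simp
    | tmul m n =>
        simp only [tBrL_tmul, map_sub, LinearMap.sub_apply, tBrL_tmul,
          Mr.lie m a b, Nl.lie a b n, sub_tmul, tmul_sub, map_sub]
        abel
    | add x y hx hy => simp_all; abel
  · intro x a b
    induction x using TensorProduct.induction_on with
    | zero => simp
    | tmul m n =>
        simp only [tBrL_tmul, Mr.mul, Nl.mul, add_tmul, tmul_add, smul_sub,
          smul_tmul', tmul_smul]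
        abel
    | add x y hx hy => simp_all; abel
  · intro b x a
    induction x using TensorProduct.induction_on with
    | zero => simp
    | tmul m n =>
        rw [smul_tmul', tBrL_tmul, tBrL_tmul, Mr.act, add_tmul, smul_tmul',
          smul_sub, smul_tmul', smul_tmul']
        abel
    | add x y hx hy => simp_all [smul_add]; abel
end

section
/- Let A be a Poisson algebra over k, δ_1 and δ_2 Poisson derivations of A, M a right Poisson A-module and N a left Poisson A-module. Then the identity map is an isomorphism of right Poisson A-modules (M^{δ_1}) ⊗_A (^{δ_2}N) ≅ (M ⊗_A N)^{δ_1−δ_2}, where the tensor products carry the tensor-product right Poisson module structure. -/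
/-! ### STATEMENT 10:
For Poisson derivations `δ₁, δ₂` of `A`, a right Poisson module `M` and a left Poisson
module `N`, the identity map is an isomorphism of right Poisson modules
`(M^{δ₁}) ⊗_A (^{δ₂}N) ≅ (M ⊗_A N)^{δ₁ - δ₂}`.
Here `Md1` is the twist `M^{δ₁}` (bracket `{m,a} + δ₁(a) • m`), `Nd2` is the twist
`^{δ₂}N` (bracket `{a,n} + δ₂(a) • n`), `T` is the tensor-product right Poisson
structure on `M ⊗[A] N` built from the twisted structures, and `T0` is the
tensor-product right Poisson structure built from the original structures; the
conclusion says that `T` coincides with the `(δ₁ - δ₂)`-twist of `T0`, i.e. the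
identity map intertwines the two brackets (it is trivially an `A`-module isomorphism). -/
open TensorProduct in
theorem stmt_10 {k A : Type*} [Field k] [IsAlgClosed k] [CharZero k]
    [CommRing A] [Algebra k A] (P : PoissonAlgebra k A)
    (δ₁ δ₂ : PoissonDerivation P)
    (M : Type*) [AddCommGroup M] [Module k M] [Module A M] [IsScalarTower k A M]
    (N : Type*) [AddCommGroup N] [Module k N] [Module A N] [IsScalarTower k A N]
    (Mr : RightPMod P M) (Nl : LeftPMod P N)
    (Md1 : RightPMod P M) (hMd1 : ∀ m a, Md1.br m a = Mr.br m a + δ₁.d a • m)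
    (Nd2 : LeftPMod P N) (hNd2 : ∀ a n, Nd2.br a n = Nl.br a n + δ₂.d a • n)
    (T : RightPMod P (M ⊗[A] N))
    (hT : ∀ m n a, T.br (m ⊗ₜ[A] n) a = (Md1.br m a) ⊗ₜ[A] n - m ⊗ₜ[A] (Nd2.br a n))
    (T0 : RightPMod P (M ⊗[A] N))
    (hT0 : ∀ m n a, T0.br (m ⊗ₜ[A] n) a = (Mr.br m a) ⊗ₜ[A] n - m ⊗ₜ[A] (Nl.br a n)) :
    ∀ (x : M ⊗[A] N) (a : A), T.br x a = T0.br x a + (δ₁.d a - δ₂.d a) • x := by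
  intro x a
  induction x using TensorProduct.induction_on with
  | zero => simp
  | tmul m n =>
      rw [hT, hT0, hMd1, hNd2]
      rw [TensorProduct.add_tmul, TensorProduct.tmul_add, TensorProduct.tmul_smul,
        TensorProduct.smul_tmul, TensorProduct.tmul_smul, sub_smul]
      abel
  | add x y hx hy =>
      simp only [map_add, LinearMap.add_apply, hx, hy, smul_add]
      abel
end

section
/- Let A be a Poisson algebra over k and S a right Poisson A-module that is invertible as an A-module (finitely generated projective of rank one). Then: (i) for every left Poisson A-module M, the natural map M → Hom_A(S, S ⊗_A M), m ↦ (s ↦ s ⊗ m), is an isomorphism of left Poisson A-modules; and (ii) for every right Poisson A-module N, the evaluation map S ⊗_A Hom_A(S, N) → N is an isomorphism of right Poisson A-modules. Hence S ⊗_A (−) and Hom_A(S, −) give an equivalence between the category of left Poisson A-modules and the category of right Poisson A-modules. -/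
open TensorProduct LinearMap

set_option synthInstance.maxHeartbeats 1000000
set_option maxHeartbeats 1000000

section InvAux

variable {R : Type*} [CommRing R] {S : Type*} [AddCommGroup S] [Module R S]

/-- The twist automorphism of `S` induced by an invertibility datum `E`. -/
noncomputable def PhiS (E : (Module.Dual R S ⊗[R] S) ≃ₗ[R] R) : S ≃ₗ[R] S :=
  (TensorProduct.lid R S).symm ≪≫ₗ
  (TensorProduct.congr E.symm (LinearEquiv.refl R S)) ≪≫ₗ
  (TensorProduct.assoc R (Module.Dual R S) S S) ≪≫ₗ
  (TensorProduct.congr (LinearEquiv.refl R (Module.Dual R S)) (TensorProduct.comm R S S)) ≪≫ₗ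
  (TensorProduct.assoc R (Module.Dual R S) S S).symm ≪≫ₗ
  (TensorProduct.congr E (LinearEquiv.refl R S)) ≪≫ₗ
  (TensorProduct.lid R S)

lemma PhiS_apply (E : (Module.Dual R S ⊗[R] S) ≃ₗ[R] R)
    (hE : ∀ (f : Module.Dual R S) (s : S), E (f ⊗ₜ[R] s) = f s) (s : S) :
    PhiS E s = dualTensorHom R S S (E.symm 1) s := by
  have key : ∀ v : Module.Dual R S ⊗[R] S,
      (TensorProduct.lid R S) ((TensorProduct.congr E (LinearEquiv.refl R S))
        ((TensorProduct.assoc R (Module.Dual R S) S S).symm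
          ((TensorProduct.congr (LinearEquiv.refl R (Module.Dual R S)) (TensorProduct.comm R S S))
            ((TensorProduct.assoc R (Module.Dual R S) S S) (v ⊗ₜ[R] s))))) =
      dualTensorHom R S S v s := by
    intro v
    induction v using TensorProduct.induction_on with
    | zero => simp only [zero_tmul, map_zero, LinearMap.zero_apply]
    | tmul f t => simp [hE]
    | add x y hx hy => simp only [add_tmul, map_add, LinearMap.add_apply, hx, hy]
  have h0 : PhiS E s = (TensorProduct.lid R S) ((TensorProduct.congr E (LinearEquiv.refl R S))
        ((TensorProduct.assoc R (Module.Dual R S) S S).symm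
          ((TensorProduct.congr (LinearEquiv.refl R (Module.Dual R S)) (TensorProduct.comm R S S))
            ((TensorProduct.assoc R (Module.Dual R S) S S) ((E.symm 1) ⊗ₜ[R] s))))) := by
    simp [PhiS]
  rw [h0, key]

/-- The twist automorphism of the dual induced by `E`. -/
noncomputable def PhistarS (E : (Module.Dual R S ⊗[R] S) ≃ₗ[R] R) :
    Module.Dual R S ≃ₗ[R] Module.Dual R S :=
  (TensorProduct.rid R (Module.Dual R S)).symm ≪≫ₗ
  (TensorProduct.congr (LinearEquiv.refl R (Module.Dual R S)) E.symm) ≪≫ₗ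
  (TensorProduct.congr (LinearEquiv.refl R (Module.Dual R S)) (TensorProduct.comm R (Module.Dual R S) S)) ≪≫ₗ
  (TensorProduct.assoc R (Module.Dual R S) S (Module.Dual R S)).symm ≪≫ₗ
  (TensorProduct.congr E (LinearEquiv.refl R (Module.Dual R S))) ≪≫ₗ
  (TensorProduct.lid R (Module.Dual R S))

lemma PhistarS_apply (E : (Module.Dual R S ⊗[R] S) ≃ₗ[R] R)
    (hE : ∀ (f : Module.Dual R S) (s : S), E (f ⊗ₜ[R] s) = f s) (g : Module.Dual R S) :
    PhistarS E g = (TensorProduct.rid R (Module.Dual R S)) ((lTensor (Module.Dual R S) g) (E.symm 1)) := by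
  have key : ∀ v : Module.Dual R S ⊗[R] S,
      (TensorProduct.lid R (Module.Dual R S))
        ((TensorProduct.congr E (LinearEquiv.refl R (Module.Dual R S)))
          ((TensorProduct.assoc R (Module.Dual R S) S (Module.Dual R S)).symm
            ((TensorProduct.congr (LinearEquiv.refl R (Module.Dual R S))
                (TensorProduct.comm R (Module.Dual R S) S)) (g ⊗ₜ[R] v)))) =
      (TensorProduct.rid R (Module.Dual R S)) ((lTensor (Module.Dual R S) g) v) := by
    intro v
    induction v using TensorProduct.induction_on with
    | zero => simp only [tmul_zero, map_zero]
    | tmul f t => simp [hE, smul_tmul']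
    | add x y hx hy => simp only [tmul_add, map_add, hx, hy]
  have h0 : PhistarS E g = (TensorProduct.lid R (Module.Dual R S))
        ((TensorProduct.congr E (LinearEquiv.refl R (Module.Dual R S)))
          ((TensorProduct.assoc R (Module.Dual R S) S (Module.Dual R S)).symm
            ((TensorProduct.congr (LinearEquiv.refl R (Module.Dual R S))
                (TensorProduct.comm R (Module.Dual R S) S)) (g ⊗ₜ[R] (E.symm 1))))) := by
    simp [PhistarS]
  rw [h0, key]

variable {N : Type*} [AddCommGroup N] [Module R N]

lemma dth_lTensor_eq (φ : S →ₗ[R] N) (v : Module.Dual R S ⊗[R] S) :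
    dualTensorHom R S N ((lTensor (Module.Dual R S) φ) v)
      = φ ∘ₗ dualTensorHom R S S v := by
  induction v using TensorProduct.induction_on with
  | zero => simp
  | tmul f t => ext s; simp
  | add x y hx hy =>
      simp only [map_add, hx, hy]
      ext s; simp

lemma lTensor_dth_eq (E : (Module.Dual R S ⊗[R] S) ≃ₗ[R] R)
    (hE : ∀ (f : Module.Dual R S) (s : S), E (f ⊗ₜ[R] s) = f s)
    (x : Module.Dual R S ⊗[R] N) :
    (lTensor (Module.Dual R S) (dualTensorHom R S N x)) (E.symm 1)
      = (TensorProduct.congr (PhistarS E) (LinearEquiv.refl R N)) x := by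
  induction x using TensorProduct.induction_on with
  | zero => simp
  | tmul g n =>
      rw [TensorProduct.congr_tmul, PhistarS_apply E hE]
      generalize E.symm 1 = v
      induction v using TensorProduct.induction_on with
      | zero => simp only [map_zero, zero_tmul]
      | tmul f t =>
          rw [lTensor_tmul, lTensor_tmul, dualTensorHom_apply, TensorProduct.rid_tmul,
            tmul_smul, smul_tmul', LinearEquiv.refl_apply]
      | add x y hx hy => simp only [map_add, add_tmul, hx, hy]
  | add x y hx hy => simp only [map_add, LinearMap.lTensor_add, LinearMap.add_apply, hx, hy]

lemma theta_bijective (E : (Module.Dual R S ⊗[R] S) ≃ₗ[R] R)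
    (hE : ∀ (f : Module.Dual R S) (s : S), E (f ⊗ₜ[R] s) = f s) :
    Function.Bijective (dualTensorHom R S N) := by
  constructor
  · intro x y hxy
    have hx := lTensor_dth_eq E hE (N := N) x
    have hy := lTensor_dth_eq E hE (N := N) y
    rw [hxy] at hx
    have := hx.symm.trans hy
    exact (TensorProduct.congr (PhistarS E) (LinearEquiv.refl R N)).injective this
  · intro φ
    refine ⟨(lTensor (Module.Dual R S) (φ ∘ₗ (PhiS E).symm.toLinearMap)) (E.symm 1), ?_⟩
    rw [dth_lTensor_eq]
    ext s
    simp only [LinearMap.comp_apply, LinearEquiv.coe_coe]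
    rw [← PhiS_apply E hE]
    simp

end InvAux


/-! ### STATEMENT 14:
Let `S` be a right Poisson module over `A` which is invertible as an `A`-module
(equivalently, the canonical evaluation map `Hom_A(S,A) ⊗[A] S → A` is bijective; for
finitely generated projective modules this holds exactly when `S` has rank one).  Then:
(i) for every left Poisson module `M`, the natural map `M → Hom_A(S, S ⊗[A] M)`,
`m ↦ (s ↦ s ⊗ m)`, is an isomorphism of left Poisson modules, and
(ii) for every right Poisson module `N`, the evaluation map `S ⊗[A] Hom_A(S,N) → N` is
an isomorphism of right Poisson modules.
Hence `S ⊗[A] -` and `Hom_A(S, -)` give an equivalence between left and right Poisson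
modules; here the Poisson structures on `S ⊗[A] M`, `Hom_A(S, S ⊗[A] M)`,
`Hom_A(S, N)` and `S ⊗[A] Hom_A(S, N)` are the tensor/Hom structures of
Proposition `P:THPoisson`, hypothesized below by their defining formulas. -/
open TensorProduct in
theorem stmt_14 {k A : Type*} [Field k] [IsAlgClosed k] [CharZero k]
    [CommRing A] [Algebra k A] (P : PoissonAlgebra k A)
    (S : Type*) [AddCommGroup S] [Module k S] [Module A S] [IsScalarTower k A S]
    (Sr : RightPMod P S)
    (hinv : Function.Bijective
      (TensorProduct.lift (LinearMap.id : Module.Dual A S →ₗ[A] S →ₗ[A] A)))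
    -- (i) :
    (M : Type*) [AddCommGroup M] [Module k M] [Module A M] [IsScalarTower k A M]
    (Ml : LeftPMod P M)
    (TSM : RightPMod P (S ⊗[A] M))
    (hTSM : ∀ s m a, TSM.br (s ⊗ₜ[A] m) a = (Sr.br s a) ⊗ₜ[A] m - s ⊗ₜ[A] (Ml.br a m))
    (HomL : LeftPMod P (S →ₗ[A] (S ⊗[A] M)))
    (hHomL : ∀ (a : A) (φ : S →ₗ[A] (S ⊗[A] M)) (s : S),
      (HomL.br a φ) s = φ (Sr.br s a) - TSM.br (φ s) a)
    -- (ii) :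
    (N : Type*) [AddCommGroup N] [Module k N] [Module A N] [IsScalarTower k A N]
    (Nr : RightPMod P N)
    (HN : LeftPMod P (S →ₗ[A] N))
    (hHN : ∀ (a : A) (φ : S →ₗ[A] N) (s : S), (HN.br a φ) s = φ (Sr.br s a) - Nr.br (φ s) a)
    (T2 : RightPMod P (S ⊗[A] (S →ₗ[A] N)))
    (hT2 : ∀ (s : S) (φ : S →ₗ[A] N) (a : A),
      T2.br (s ⊗ₜ[A] φ) a = (Sr.br s a) ⊗ₜ[A] φ - s ⊗ₜ[A] (HN.br a φ)) :
    -- (i) the coevaluation is an isomorphism of left Poisson modules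
    (Function.Bijective (fun m : M => (TensorProduct.mk A S M).flip m) ∧
      (∀ (a : A) (m : M),
        (TensorProduct.mk A S M).flip (Ml.br a m) = HomL.br a ((TensorProduct.mk A S M).flip m))) ∧
    -- (ii) the evaluation is an isomorphism of right Poisson modules
    (Function.Bijective
        (TensorProduct.lift ((LinearMap.id : (S →ₗ[A] N) →ₗ[A] (S →ₗ[A] N)).flip)) ∧
      (∀ (x : S ⊗[A] (S →ₗ[A] N)) (a : A),
        TensorProduct.lift ((LinearMap.id : (S →ₗ[A] N) →ₗ[A] (S →ₗ[A] N)).flip) (T2.br x a)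
          = Nr.br (TensorProduct.lift
              ((LinearMap.id : (S →ₗ[A] N) →ₗ[A] (S →ₗ[A] N)).flip) x) a)) := by
  classical
  -- the invertibility datum
  set T := Module.Dual A S with hT
  let E : (Module.Dual A S ⊗[A] S) ≃ₗ[A] A :=
    LinearEquiv.ofBijective
      (TensorProduct.lift (LinearMap.id : Module.Dual A S →ₗ[A] S →ₗ[A] A)) hinv
  have hE : ∀ (f : Module.Dual A S) (s : S), E (f ⊗ₜ[A] s) = f s := by
    intro f s
    simp [E, LinearEquiv.ofBijective_apply]
  refine ⟨⟨?_, ?_⟩, ?_, ?_⟩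
  · -- (i) bijectivity of coevaluation
    let ιE : M ≃ₗ[A] Module.Dual A S ⊗[A] (S ⊗[A] M) :=
      (TensorProduct.lid A M).symm ≪≫ₗ
        TensorProduct.congr E.symm (LinearEquiv.refl A M) ≪≫ₗ
        TensorProduct.assoc A (Module.Dual A S) S M
    have hι : ∀ m : M, ιE m = (TensorProduct.assoc A (Module.Dual A S) S M)
        ((E.symm 1) ⊗ₜ[A] m) := by
      intro m; simp [ιE]
    have I4 : ∀ (v : Module.Dual A S ⊗[A] S) (m : M) (s : S),
        dualTensorHom A S (S ⊗[A] M) ((TensorProduct.assoc A (Module.Dual A S) S M)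
          (v ⊗ₜ[A] m)) s = (dualTensorHom A S S v s) ⊗ₜ[A] m := by
      intro v m s
      induction v using TensorProduct.induction_on with
      | zero => simp only [zero_tmul, map_zero, LinearMap.zero_apply]
      | tmul f t => simp [smul_tmul']
      | add x y hx hy => simp only [add_tmul, map_add, LinearMap.add_apply, hx, hy]
    have hco : ∀ m : M, (TensorProduct.mk A S M).flip m
        = (LinearEquiv.arrowCongr (PhiS E) (LinearEquiv.refl A (S ⊗[A] M)))
            (dualTensorHom A S (S ⊗[A] M) (ιE m)) := by
      intro m
      ext s
      rw [LinearEquiv.arrowCongr_apply, hι, I4, ← PhiS_apply E hE, LinearEquiv.apply_symm_apply]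
      simp [TensorProduct.mk_apply]
    have hfun : (fun m : M => (TensorProduct.mk A S M).flip m)
        = (fun φ => (LinearEquiv.arrowCongr (PhiS E) (LinearEquiv.refl A (S ⊗[A] M))) φ) ∘
          (fun x => dualTensorHom A S (S ⊗[A] M) x) ∘ (fun m => ιE m) := funext hco
    rw [hfun]
    exact (LinearEquiv.arrowCongr (PhiS E)
      (LinearEquiv.refl A (S ⊗[A] M))).bijective.comp
      ((theta_bijective E hE).comp ιE.bijective)
  · -- (i) Poisson compatibility of coevaluation
    intro a m
    ext s
    rw [hHomL]
    simp only [LinearMap.flip_apply, TensorProduct.mk_apply, hTSM]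
    abel
  · -- (ii) bijectivity of evaluation
    let θE : Module.Dual A S ⊗[A] N ≃ₗ[A] (S →ₗ[A] N) :=
      LinearEquiv.ofBijective (dualTensorHom A S N) (theta_bijective E hE)
    let ΞE : S ⊗[A] (Module.Dual A S ⊗[A] N) ≃ₗ[A] S ⊗[A] (S →ₗ[A] N) :=
      TensorProduct.congr (LinearEquiv.refl A S) θE
    let chainE : S ⊗[A] (Module.Dual A S ⊗[A] N) ≃ₗ[A] N :=
      (TensorProduct.assoc A S (Module.Dual A S) N).symm ≪≫ₗ
        TensorProduct.congr (TensorProduct.comm A S (Module.Dual A S)) (LinearEquiv.refl A N) ≪≫ₗ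
        TensorProduct.congr E (LinearEquiv.refl A N) ≪≫ₗ
        TensorProduct.lid A N
    have hev : ∀ y : S ⊗[A] (Module.Dual A S ⊗[A] N),
        TensorProduct.lift ((LinearMap.id : (S →ₗ[A] N) →ₗ[A] (S →ₗ[A] N)).flip) (ΞE y)
          = chainE y := by
      intro y
      induction y using TensorProduct.induction_on with
      | zero => simp only [map_zero]
      | tmul s z =>
          induction z using TensorProduct.induction_on with
          | zero => simp only [tmul_zero, map_zero]
          | tmul f n =>
              simp [ΞE, θE, chainE, hE, LinearEquiv.ofBijective_apply]
          | add x y hx hy => simp only [tmul_add, map_add, hx, hy]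
      | add x y hx hy => simp only [map_add, hx, hy]
    have hfun : ⇑(TensorProduct.lift ((LinearMap.id : (S →ₗ[A] N) →ₗ[A] (S →ₗ[A] N)).flip))
        = ⇑chainE ∘ ⇑ΞE.symm := by
      funext x
      have := hev (ΞE.symm x)
      rw [LinearEquiv.apply_symm_apply] at this
      simpa using this
    rw [hfun]
    exact chainE.bijective.comp ΞE.symm.bijective
  · -- (ii) Poisson compatibility of evaluation
    intro x a
    induction x using TensorProduct.induction_on with
    | zero => simp
    | tmul s φ =>
        rw [hT2]
        simp only [map_sub, TensorProduct.lift.tmul, LinearMap.flip_apply, LinearMap.id_coe,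
          id_eq, hHN]
        abel
    | add x y hx hy =>
        simp only [map_add, LinearMap.add_apply, hx, hy]
end
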